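/- arXiv:1605.07413 — 2 statements merged into one kernel-verified Lean document; each statement's English description precedes it below -/
import Mathlib

section
/- Let $\lambda > 0$ and let $N$ be a Poisson random variable with parameter $\lambda$. If $Y = f(N)$ for a Borel function $f$ with $\mathbb{E}[f(N)^2 \ln^+(f(N)^2)] < \infty$, then $\mathbb{E}[f(N)^2 \, N] \leq \mathbb{E}[f(N)^2 \ln^+(f(N)^2)] + e^{(e-1)\lambda} - \lambda$. -/
open Nat

lemma exp_pred_le (n : ℕ) : Real.exp ((n : ℝ) - 1) ≤ Real.exp n - n := by
  rcases Nat.eq_zero_or_pos n with h | h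
  · subst h
    have h1 : Real.exp (-1:ℝ) ≤ Real.exp 0 := Real.exp_le_exp.2 (by norm_num)
    rw [Real.exp_zero] at h1
    simp only [Nat.cast_zero, zero_sub, sub_zero, Real.exp_zero]
    linarith
  · have h1 : (n : ℝ) ≤ Real.exp ((n : ℝ) - 1) := by
      have := Real.add_one_le_exp ((n : ℝ) - 1)
      linarith
    have h2 : Real.exp (n : ℝ) = Real.exp ((n : ℝ) - 1) * Real.exp 1 := by
      rw [← Real.exp_add]; ring_nf
    have h3 : (2 : ℝ) ≤ Real.exp 1 := by
      have := Real.add_one_le_exp (1 : ℝ); linarith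
    have h4 : (0 : ℝ) < Real.exp ((n : ℝ) - 1) := Real.exp_pos _
    nlinarith

lemma key_ineq (x : ℝ) (hx : 0 ≤ x) (n : ℕ) :
    x * n ≤ x * max (Real.log x) 0 + (Real.exp n - n) := by
  set a : ℝ := max x 1 with ha
  have ha1 : 1 ≤ a := le_max_right _ _
  have ha0 : 0 < a := lt_of_lt_of_le one_pos ha1
  have hxa : x ≤ a := le_max_left _ _
  have hlog : x * max (Real.log x) 0 = a * Real.log a := by
    rcases le_or_gt 1 x with h | h
    · rw [ha, max_eq_left h, max_eq_left (Real.log_nonneg h)]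
    · rw [ha, max_eq_right h.le, Real.log_one,
        max_eq_right (Real.log_nonpos hx h.le), mul_zero, mul_zero]
  rw [hlog]
  have hxn : x * n ≤ a * n := mul_le_mul_of_nonneg_right hxa (Nat.cast_nonneg n)
  refine hxn.trans ?_
  set t : ℝ := Real.log a with ht
  have ht0 : 0 ≤ t := Real.log_nonneg ha1
  have hat : a = Real.exp t := (Real.exp_log ha0).symm
  rw [hat]
  rcases le_or_gt (n : ℝ) t with h | h
  · have h1 : Real.exp t * n ≤ Real.exp t * t :=
      mul_le_mul_of_nonneg_left h (Real.exp_pos t).le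
    have h2 : (n : ℝ) + 1 ≤ Real.exp n := Real.add_one_le_exp _
    linarith
  · -- t < n : use exp t * (n - t) ≤ exp (n - 1) ≤ exp n - n
    have hu : (0 : ℝ) < (n : ℝ) - t := by linarith
    have h1 : (n : ℝ) - t ≤ Real.exp ((n : ℝ) - t - 1) := by
      have := Real.add_one_le_exp ((n : ℝ) - t - 1); linarith
    have h2 : Real.exp t * ((n : ℝ) - t) ≤ Real.exp t * Real.exp ((n : ℝ) - t - 1) :=
      mul_le_mul_of_nonneg_left h1 (Real.exp_pos t).le
    rw [← Real.exp_add] at h2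
    have h3 : t + ((n : ℝ) - t - 1) = (n : ℝ) - 1 := by ring
    rw [h3] at h2
    have h4 := exp_pred_le n
    nlinarith [Real.exp_pos t]

theorem stmt_10 (lam : ℝ) (hlam : 0 < lam) (f : ℕ → ℝ)
    (hf : Summable (fun n : ℕ =>
      f n ^ 2 * max (Real.log (f n ^ 2)) 0 * (Real.exp (-lam) * lam ^ n / n !))) :
    Summable (fun n : ℕ => f n ^ 2 * n * (Real.exp (-lam) * lam ^ n / n !)) ∧
    (∑' n : ℕ, f n ^ 2 * n * (Real.exp (-lam) * lam ^ n / n !))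
      ≤ (∑' n : ℕ, f n ^ 2 * max (Real.log (f n ^ 2)) 0
            * (Real.exp (-lam) * lam ^ n / n !))
        + (Real.exp ((Real.exp 1 - 1) * lam) - lam) := by
  set p : ℕ → ℝ := fun n => Real.exp (-lam) * lam ^ n / n ! with hp
  have hp0 : ∀ n, 0 ≤ p n := fun n => by
    have : (0:ℝ) < lam ^ n := pow_pos hlam n
    positivity
  -- Summability of exp n * p n
  have hse : Summable (fun n : ℕ => Real.exp n * p n) := by
    have h1 : Summable (fun n : ℕ => (Real.exp 1 * lam) ^ n / n !) :=
      Real.summable_pow_div_factorial _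
    have := h1.mul_left (Real.exp (-lam))
    refine this.congr fun n => ?_
    have hpow : Real.exp 1 ^ n = Real.exp n := by rw [← Real.exp_nat_mul, mul_one]
    simp only [hp, mul_pow, hpow]
    ring
  -- Summability of n * p n
  have hsn : Summable (fun n : ℕ => (n : ℝ) * p n) := by
    have h1 : Summable (fun n : ℕ => Real.exp (-lam) * ((2 * lam) ^ n / n !)) :=
      (Real.summable_pow_div_factorial (2 * lam)).mul_left _
    refine Summable.of_nonneg_of_le (fun n => ?_) (fun n => ?_) h1
    · have := hp0 n; positivity
    · have hn2 : (n : ℝ) ≤ 2 ^ n := by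
        exact_mod_cast Nat.le_of_lt_succ (Nat.lt_succ_of_le (Nat.lt_two_pow_self (n := n)).le)
      simp only [hp, mul_pow]
      calc (n:ℝ) * (Real.exp (-lam) * lam ^ n / ↑n !)
          ≤ (2:ℝ)^n * (Real.exp (-lam) * lam ^ n / ↑n !) := by
            apply mul_le_mul_of_nonneg_right hn2
            have := hp0 n; positivity
        _ = Real.exp (-lam) * (2 ^ n * lam ^ n / ↑n !) := by ring
  have hsen : Summable (fun n : ℕ => (Real.exp n - n) * p n) := by
    refine (hse.sub hsn).congr fun n => ?_; ring
  -- pointwise bound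
  have hbound : ∀ n : ℕ, f n ^ 2 * n * p n ≤
      f n ^ 2 * max (Real.log (f n ^ 2)) 0 * p n + (Real.exp n - n) * p n := by
    intro n
    have h := key_ineq (f n ^ 2) (sq_nonneg _) n
    have := mul_le_mul_of_nonneg_right h (hp0 n)
    calc f n ^ 2 * n * p n = (f n ^ 2 * n) * p n := by ring
      _ ≤ (f n ^ 2 * max (Real.log (f n ^ 2)) 0 + (Real.exp n - n)) * p n := this
      _ = f n ^ 2 * max (Real.log (f n ^ 2)) 0 * p n + (Real.exp n - n) * p n := by ring
  have hsum : Summable (fun n : ℕ => f n ^ 2 * n * p n) := by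
    refine Summable.of_nonneg_of_le (fun n => ?_) hbound (hf.add hsen)
    have := hp0 n
    have h2 : (0:ℝ) ≤ f n ^ 2 := sq_nonneg _
    positivity
  refine ⟨hsum, ?_⟩
  -- tsum of (exp n - n) * p n
  have hexp_tsum : ∀ x : ℝ, Real.exp x = ∑' n : ℕ, x ^ n / n ! := by
    intro x
    rw [Real.exp_eq_exp_ℝ, NormedSpace.exp_eq_tsum_div]
  have hte : (∑' n : ℕ, Real.exp n * p n) = Real.exp ((Real.exp 1 - 1) * lam) := by
    have h1 : (∑' n : ℕ, Real.exp n * p n)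
        = ∑' n : ℕ, Real.exp (-lam) * ((Real.exp 1 * lam) ^ n / n !) := by
      refine tsum_congr fun n => ?_
      have hpow : Real.exp 1 ^ n = Real.exp n := by rw [← Real.exp_nat_mul, mul_one]
      simp only [hp, mul_pow, hpow]
      ring
    rw [h1, tsum_mul_left, ← hexp_tsum, ← Real.exp_add]
    ring_nf
  have htn : (∑' n : ℕ, (n : ℝ) * p n) = lam := by
    have h1 : (∑' n : ℕ, (n : ℝ) * p n) = ∑' n : ℕ, (n : ℝ) * p n := rfl
    rw [Summable.tsum_eq_zero_add hsn]
    have h2 : ∀ n : ℕ, ((n + 1 : ℕ) : ℝ) * p (n + 1) = Real.exp (-lam) * lam * (lam ^ n / n !) := by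
      intro n
      simp only [hp, Nat.factorial_succ, pow_succ, Nat.cast_mul, Nat.cast_add, Nat.cast_one]
      have hfn : ((n ! : ℕ) : ℝ) ≠ 0 := Nat.cast_ne_zero.2 (Nat.factorial_ne_zero n)
      have hn1 : ((n : ℝ) + 1) ≠ 0 := by positivity
      field_simp
    rw [tsum_congr h2, tsum_mul_left, ← hexp_tsum, Nat.cast_zero, zero_mul, zero_add]
    rw [Real.exp_neg]
    have := Real.exp_pos lam
    field_simp
  have htsub : (∑' n : ℕ, (Real.exp n - n) * p n)
      = Real.exp ((Real.exp 1 - 1) * lam) - lam := by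
    have : (∑' n : ℕ, (Real.exp n - n) * p n)
        = (∑' n : ℕ, (Real.exp n * p n - (n : ℝ) * p n)) := by
      refine tsum_congr fun n => ?_; ring
    rw [this, Summable.tsum_sub hse hsn, hte, htn]
  calc (∑' n : ℕ, f n ^ 2 * n * p n)
      ≤ ∑' n : ℕ, (f n ^ 2 * max (Real.log (f n ^ 2)) 0 * p n + (Real.exp n - n) * p n) :=
        Summable.tsum_le_tsum hbound hsum (hf.add hsen)
    _ = (∑' n : ℕ, f n ^ 2 * max (Real.log (f n ^ 2)) 0 * p n)
        + ∑' n : ℕ, (Real.exp n - n) * p n := Summable.tsum_add hf hsen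
    _ = (∑' n : ℕ, f n ^ 2 * max (Real.log (f n ^ 2)) 0 * p n)
        + (Real.exp ((Real.exp 1 - 1) * lam) - lam) := by rw [htsub]
end

section
/- Let $\lambda > 0$, $a \in (1,2]$, and define $f: \mathbb{N} \to \mathbb{R}$ by $f(0) = f(1) = 0$ and $f(n) = \sqrt{e^{\lambda} \frac{n!}{\lambda^n} \frac{1}{n^2 (\ln n)^a}}$ for $n \geq 2$. If $N$ is a Poisson random variable with parameter $\lambda$, then $\mathbb{E}[N f(N)^2] = \sum_{n=2}^\infty \frac{1}{n(\ln n)^a} < \infty$ while $\mathbb{E}[f(N)^2 \ln^+(f(N)^2)] = \infty$. -/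
/-!
Writing `p n = e^{-λ} λ^n / n!`, the definition of `f` makes `f n ^ 2 * p n = 1 / (n^2 (log n)^a)`,
so `E[N f(N)^2]` is the Bertrand series `∑ 1 / (n (log n)^a)`, which converges for `a > 1` by
Cauchy condensation. On the other hand `log n! ≥ n log n - n` makes `log (f n ^ 2) ≥ (n log n) / 2`
for large `n`, so the terms of `E[f(N)^2 log⁺ f(N)^2]` eventually dominate `1 / (2 n log n)`, the
divergent Bertrand series with exponent `1`.
-/

open Real Filter
open scoped Nat

theorem ENNReal.tsum_ofReal_eq_top_of_eventually_le {ι : Type*} {g h : ι → ℝ}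
    (hg : ∀ᶠ i in cofinite, 0 ≤ g i) (hg_sum : ¬Summable g)
    (hgh : ∀ᶠ i in cofinite, g i ≤ h i) : ∑' i, ENNReal.ofReal (h i) = ⊤ := by
  by_contra hne
  refine hg_sum (.of_norm_bounded_eventually (ENNReal.summable_toReal hne) ?_)
  filter_upwards [hg, hgh] with i hgi hghi
  rw [ENNReal.toReal_ofReal', Real.norm_of_nonneg hgi]
  exact hghi.trans (le_max_left _ _)

theorem Real.summable_one_div_nat_mul_log_rpow_iff {p : ℝ} (hp : 0 ≤ p) :
    Summable (fun n : ℕ => 1 / (n * log n ^ p)) ↔ 1 < p := by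
  have h_nonneg (n : ℕ) : 0 ≤ 1 / (n * log n ^ p) := by
    have := log_natCast_nonneg n
    positivity
  have h_anti : ∀ᶠ n : ℕ in atTop,
      1 / ((n + 1 : ℕ) * log (n + 1 : ℕ) ^ p) ≤ 1 / (n * log n ^ p) := by
    filter_upwards [eventually_ge_atTop 2] with n hn
    have hlog : 0 < log n := log_pos (by exact_mod_cast hn)
    have hn' : (n : ℝ) ≤ (n + 1 : ℕ) := by exact_mod_cast n.le_succ
    gcongr
  have h_condensed (k : ℕ) :
      (2 : ℝ) ^ k * (1 / ((2 ^ k : ℕ) * log (2 ^ k : ℕ) ^ p)) = 1 / (k : ℝ) ^ p / log 2 ^ p := by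
    rw [Nat.cast_pow, Nat.cast_ofNat, log_pow, mul_rpow k.cast_nonneg (log_nonneg one_le_two)]
    field_simp
  rw [← summable_condensed_iff_of_eventually_nonneg (.of_forall h_nonneg) h_anti,
    funext h_condensed, summable_div_const_iff (by positivity), summable_one_div_nat_rpow]

/-- The value of `f n ^ 2` for `n ≥ 2`. -/
noncomputable def fSq (lam a : ℝ) (n : ℕ) : ℝ :=
  exp lam * (n ! / lam ^ n) * (1 / (n ^ 2 * log n ^ a))

section

variable {lam a : ℝ}

lemma fSq_nonneg (hlam : 0 < lam) (n : ℕ) : 0 ≤ fSq lam a n := by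
  have := log_natCast_nonneg n
  unfold fSq
  positivity

lemma fSq_mul_poisson (hlam : lam ≠ 0) (n : ℕ) :
    fSq lam a n * (exp (-lam) * lam ^ n / n !) = 1 / (n ^ 2 * log n ^ a) := by
  rw [fSq, exp_neg]
  field_simp

lemma log_fSq (hlam : 0 < lam) {n : ℕ} (hn : 2 ≤ n) :
    log (fSq lam a n) = lam + log n ! - n * log lam - 2 * log n - a * log (log n) := by
  have hlog : 0 < log n := log_pos (by exact_mod_cast hn)
  rw [fSq, log_mul (by positivity) (by positivity), log_mul (by positivity) (by positivity),
    log_exp, log_div (by positivity) (by positivity), one_div, log_inv,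
    log_mul (by positivity) (by positivity), log_pow, log_pow, log_rpow hlog]
  push_cast
  ring

lemma mul_log_sub_le_log_factorial (n : ℕ) : n * log n - n ≤ log n ! := by
  rcases n.eq_zero_or_pos with rfl | hn
  · simp
  have h_stirling := Stirling.le_log_factorial_stirling hn.ne'
  have h_log_n := log_natCast_nonneg n
  have h_log_two_pi := log_pos (by linarith [pi_gt_three] : (1 : ℝ) < 2 * π)
  linarith

lemma eventually_le_log_natCast (c : ℝ) : ∀ᶠ n : ℕ in atTop, c ≤ log n :=
  (tendsto_log_atTop.comp tendsto_natCast_atTop_atTop).eventually_ge_atTop c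

lemma eventually_mul_log_le_two_mul_log_fSq (hlam : 0 < lam) (ha : a ≤ 2) :
    ∀ᶠ n : ℕ in atTop, n * log n ≤ 2 * log (fSq lam a n) := by
  filter_upwards [eventually_le_log_natCast (2 * (5 + |log lam|)), eventually_ge_atTop 2]
    with n hK hn
  have hL : 1 ≤ log n := by linarith [abs_nonneg (log lam)]
  have hn0 : (0 : ℝ) ≤ n := n.cast_nonneg
  have h_log_le : log n ≤ n := log_le_self hn0
  have h_loglog : a * log (log n) ≤ 2 * n := calc
    a * log (log n) ≤ 2 * log (log n) := by gcongr; exact log_nonneg hL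
    _ ≤ 2 * n := by gcongr; exact (log_le_self (by linarith)).trans h_log_le
  have h_lam : n * log lam ≤ n * |log lam| := by gcongr; exact le_abs_self _
  have h_big : n * (2 * (5 + |log lam|)) ≤ n * log n := by gcongr
  rw [log_fSq hlam hn]
  linarith [mul_log_sub_le_log_factorial n]

lemma eventually_le_fSq_mul_log_mul_poisson (hlam : 0 < lam) (ha : a ≤ 2) :
    ∀ᶠ n : ℕ in atTop, 1 / (n * log n) / 2 ≤
      fSq lam a n * max (log (fSq lam a n)) 0 * (exp (-lam) * lam ^ n / n !) := by
  filter_upwards [eventually_mul_log_le_two_mul_log_fSq hlam ha, eventually_le_log_natCast 1,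
    eventually_ge_atTop 1] with n hlog hL hn
  have hn0 : (0 : ℝ) < n := by exact_mod_cast hn
  rw [mul_right_comm, fSq_mul_poisson hlam.ne']
  calc 1 / (n * log n) / 2 = 1 / (n ^ 2 * log n ^ (2 : ℝ)) * (n * log n / 2) := by
        rw [rpow_two]; field_simp
    _ ≤ 1 / (n ^ 2 * log n ^ a) * max (log (fSq lam a n)) 0 := by
        gcongr 1 / (_ * ?_) * ?_
        · exact rpow_le_rpow_of_exponent_le hL ha
        · exact le_max_of_le_left (by linarith)

end

open Nat

theorem stmt_11 (lam a : ℝ) (hlam : 0 < lam) (ha : a ∈ Set.Ioc (1:ℝ) 2)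
    (f : ℕ → ℝ) (hf0 : f 0 = 0) (hf1 : f 1 = 0)
    (hf : ∀ n : ℕ, 2 ≤ n →
      f n = Real.sqrt (Real.exp lam * (n ! / lam ^ n) * (1 / (n ^ 2 * Real.log n ^ a)))) :
    Summable (fun n : ℕ => (n : ℝ) * f n ^ 2 * (Real.exp (-lam) * lam ^ n / n !)) ∧
    (∑' n : ℕ, (n : ℝ) * f n ^ 2 * (Real.exp (-lam) * lam ^ n / n !))
      = (∑' n : ℕ, if 2 ≤ n then 1 / (n * Real.log n ^ a) else 0) ∧
    (∑' n : ℕ, ENNReal.ofReal (f n ^ 2 * max (Real.log (f n ^ 2)) 0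
        * (Real.exp (-lam) * lam ^ n / n !))) = ⊤ := by
  obtain ⟨ha1, ha2⟩ := ha
  have hf_sq (n : ℕ) (hn : 2 ≤ n) : f n ^ 2 = fSq lam a n := by
    rw [hf n hn]
    exact sq_sqrt (fSq_nonneg hlam n)
  have h_term (n : ℕ) : (n : ℝ) * f n ^ 2 * (Real.exp (-lam) * lam ^ n / n !) =
      if 2 ≤ n then 1 / (n * Real.log n ^ a) else 0 := by
    split_ifs with hn
    · rw [hf_sq n hn, mul_assoc, fSq_mul_poisson hlam.ne']
      field_simp
    · interval_cases n <;> simp [hf0, hf1]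
  have h_sum : Summable (fun n : ℕ => if 2 ≤ n then 1 / (n * Real.log n ^ a) else 0) :=
    ((summable_one_div_nat_mul_log_rpow_iff (by linarith)).2 ha1).congr_atTop
      (by filter_upwards [eventually_ge_atTop 2] with n hn using (if_pos hn).symm)
  refine ⟨(summable_congr h_term).2 h_sum, tsum_congr h_term, ?_⟩
  have h_not_sum : ¬Summable (fun n : ℕ => 1 / (n * Real.log n) / 2) := by
    simpa [summable_div_const_iff, rpow_one] using
      (summable_one_div_nat_mul_log_rpow_iff zero_le_one).not.2 (lt_irrefl 1)
  refine ENNReal.tsum_ofReal_eq_top_of_eventually_le (.of_forall fun n => ?_) h_not_sum ?_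
  · have := Real.log_natCast_nonneg n
    positivity
  rw [Nat.cofinite_eq_atTop]
  filter_upwards [eventually_le_fSq_mul_log_mul_poisson hlam ha2, eventually_ge_atTop 2]
    with n h hn
  rwa [hf_sq n hn]
end
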